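/- Let p(x) = (x + 4/3)ln(1 - 1/(2(x+4/3))) - (x + 1/3)ln(1 - 1/(2(x+1/3))) - (1/2)ln(1 + 1/x) - ln((2x+1)/(2x+2)). Then p''(x) > 0 for all x > 1, i.e., p is strictly convex on (1, ∞). -/

import Mathlib

open Real

noncomputable def p (x : ℝ) : ℝ :=
  (x + 4/3) * Real.log (1 - 1 / (2 * (x + 4/3)))
    - (x + 1/3) * Real.log (1 - 1 / (2 * (x + 1/3)))
    - (1/2) * Real.log (1 + 1 / x) - Real.log ((2 * x + 1) / (2 * x + 2))

noncomputable def pq (x : ℝ) : ℝ :=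
  (x + 4/3) * (Real.log (6*x+5) - Real.log (6*x+8))
    - (x + 1/3) * (Real.log (6*x-1) - Real.log (6*x+2))
    - (1/2) * (Real.log (x+1) - Real.log x)
    - (Real.log (2*x+1) - Real.log (2*x+2))

noncomputable def pq1 (x : ℝ) : ℝ :=
  ((Real.log (6*x+5) - Real.log (6*x+8)) + (x + 4/3) * (6/(6*x+5) - 6/(6*x+8)))
    - ((Real.log (6*x-1) - Real.log (6*x+2)) + (x + 1/3) * (6/(6*x-1) - 6/(6*x+2)))
    - (1/2) * (1/(x+1) - 1/x)
    - (2/(2*x+1) - 2/(2*x+2))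

noncomputable def pq2 (x : ℝ) : ℝ :=
  ((6/(6*x+5) - 6/(6*x+8)) + ((6/(6*x+5) - 6/(6*x+8))
      + (x + 4/3) * (-(36/(6*x+5)^2) + 36/(6*x+8)^2)))
    - ((6/(6*x-1) - 6/(6*x+2)) + ((6/(6*x-1) - 6/(6*x+2))
      + (x + 1/3) * (-(36/(6*x-1)^2) + 36/(6*x+2)^2)))
    - (1/2) * (-(1/(x+1)^2) + 1/x^2)
    - (-(4/(2*x+1)^2) + 4/(2*x+2)^2)

lemma lin_hasDerivAt (a b y : ℝ) : HasDerivAt (fun z : ℝ => a * z + b) a y := by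
  simpa using ((hasDerivAt_id y).const_mul a).add_const b

lemma loglin_hasDerivAt (a b y : ℝ) (h : a * y + b ≠ 0) :
    HasDerivAt (fun z : ℝ => Real.log (a * z + b)) (a / (a * y + b)) y :=
  (lin_hasDerivAt a b y).log h

lemma facts_pos {y : ℝ} (hy : 1 < y) :
    0 < 6*y+5 ∧ 0 < 6*y+8 ∧ 0 < 6*y-1 ∧ 0 < 6*y+2 ∧ 0 < y ∧ 0 < y+1 ∧
      0 < 2*y+1 ∧ 0 < 2*y+2 := by
  refine ⟨by linarith, by linarith, by linarith, by linarith, by linarith,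
    by linarith, by linarith, by linarith⟩

lemma pq_hasDerivAt {y : ℝ} (hy : 1 < y) : HasDerivAt pq (pq1 y) y := by
  obtain ⟨h1, h2, h3, h4, h5, h6, h7, h8⟩ := facts_pos hy
  have l1 := loglin_hasDerivAt 6 5 y h1.ne'
  have l2 := loglin_hasDerivAt 6 8 y h2.ne'
  have l3 : HasDerivAt (fun z : ℝ => Real.log (6*z-1)) (6 / (6*y-1)) y := by
    have := loglin_hasDerivAt 6 (-1) y (by linarith)
    simpa [sub_eq_add_neg] using this
  have l4 := loglin_hasDerivAt 6 2 y h4.ne'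
  have l5 : HasDerivAt (fun z : ℝ => Real.log (z+1)) (1 / (y+1)) y := by
    have := loglin_hasDerivAt 1 1 y (by linarith)
    simpa using this
  have l6 : HasDerivAt (fun z : ℝ => Real.log z) (1 / y) y := by
    simpa using Real.hasDerivAt_log h5.ne'
  have l7 := loglin_hasDerivAt 2 1 y h7.ne'
  have l8 := loglin_hasDerivAt 2 2 y h8.ne'
  have m1 : HasDerivAt (fun z : ℝ => z + 4/3) 1 y := (hasDerivAt_id y).add_const _
  have m2 : HasDerivAt (fun z : ℝ => z + 1/3) 1 y := (hasDerivAt_id y).add_const _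
  have H : HasDerivAt pq
      ((1 * (Real.log (6*y+5) - Real.log (6*y+8)) + (y + 4/3) * (6/(6*y+5) - 6/(6*y+8)))
        - (1 * (Real.log (6*y-1) - Real.log (6*y+2)) + (y + 1/3) * (6/(6*y-1) - 6/(6*y+2)))
        - (1/2) * (1/(y+1) - 1/y)
        - (2/(2*y+1) - 2/(2*y+2))) y := by
    exact (((m1.mul (l1.sub l2)).sub (m2.mul (l3.sub l4))).sub
      ((l5.sub l6).const_mul (1/2))).sub (l7.sub l8)
  have : pq1 y = (1 * (Real.log (6*y+5) - Real.log (6*y+8)) + (y + 4/3) * (6/(6*y+5) - 6/(6*y+8)))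
        - (1 * (Real.log (6*y-1) - Real.log (6*y+2)) + (y + 1/3) * (6/(6*y-1) - 6/(6*y+2)))
        - (1/2) * (1/(y+1) - 1/y)
        - (2/(2*y+1) - 2/(2*y+2)) := by
    unfold pq1; ring
  rw [this]; exact H

lemma invlin_hasDerivAt (a b y : ℝ) (h : a * y + b ≠ 0) :
    HasDerivAt (fun z : ℝ => a / (a * z + b)) (-(a * a / (a * y + b)^2)) y := by
  have := ((lin_hasDerivAt a b y).div_const 1)
  have H := (lin_hasDerivAt a b y).inv h
  have := H.const_mul a
  simpa [mul_comm, mul_div_assoc, div_eq_mul_inv, neg_mul, mul_assoc] using this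

lemma pq1_hasDerivAt {y : ℝ} (hy : 1 < y) : HasDerivAt pq1 (pq2 y) y := by
  obtain ⟨h1, h2, h3, h4, h5, h6, h7, h8⟩ := facts_pos hy
  have l1 := loglin_hasDerivAt 6 5 y h1.ne'
  have l2 := loglin_hasDerivAt 6 8 y h2.ne'
  have l3 := loglin_hasDerivAt 6 (-1) y (by linarith)
  have l4 := loglin_hasDerivAt 6 2 y h4.ne'
  have i1 := invlin_hasDerivAt 6 5 y h1.ne'
  have i2 := invlin_hasDerivAt 6 8 y h2.ne'
  have i3 := invlin_hasDerivAt 6 (-1) y (by linarith)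
  have i4 := invlin_hasDerivAt 6 2 y h4.ne'
  have i5 := invlin_hasDerivAt 1 1 y (by linarith)
  have i6 := invlin_hasDerivAt 1 0 y (by simp; linarith)
  have i7 := invlin_hasDerivAt 2 1 y h7.ne'
  have i8 := invlin_hasDerivAt 2 2 y h8.ne'
  have m1 : HasDerivAt (fun z : ℝ => z + 4/3) 1 y := (hasDerivAt_id y).add_const _
  have m2 : HasDerivAt (fun z : ℝ => z + 1/3) 1 y := (hasDerivAt_id y).add_const _
  have A := (l1.sub l2).add (m1.mul (i1.sub i2))
  have B := (l3.sub l4).add (m2.mul (i3.sub i4))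
  have C := (i5.sub i6).const_mul (1/2 : ℝ)
  have D := i7.sub i8
  have H := ((A.sub B).sub C).sub D
  have H2 := H.congr_of_eventuallyEq (f₁ := pq1)
    (Filter.Eventually.of_forall fun z => by unfold pq1; simp only [Pi.add_apply, Pi.sub_apply, Pi.mul_apply]; ring_nf)
  refine H2.congr_deriv ?_
  unfold pq2
  simp only [Pi.sub_apply]
  ring

lemma p_eq_pq {y : ℝ} (hy : 1 < y) : p y = pq y := by
  obtain ⟨h1, h2, h3, h4, h5, h6, h7, h8⟩ := facts_pos hy
  unfold p pq
  have e1 : 1 - 1 / (2 * (y + 4/3)) = (6*y+5) / (6*y+8) := by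
    field_simp; ring
  have e2 : 1 - 1 / (2 * (y + 1/3)) = (6*y-1) / (6*y+2) := by
    field_simp; ring
  have e3 : 1 + 1 / y = (y+1) / y := by field_simp
  rw [e1, e2, e3, Real.log_div h1.ne' h2.ne', Real.log_div (by linarith : (6*y-1) ≠ 0) h4.ne',
    Real.log_div h6.ne' h5.ne', Real.log_div h7.ne' h8.ne']

lemma pq2_pos {y : ℝ} (hy : 1 < y) : 0 < pq2 y := by
  obtain ⟨h1, h2, h3, h4, h5, h6, h7, h8⟩ := facts_pos hy
  have key : pq2 y = (11197440*(y-1)^10 + 186250752*(y-1)^9 + 1383972480*(y-1)^8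
      + 6048193536*(y-1)^7 + 17209647072*(y-1)^6 + 33304104000*(y-1)^5
      + 44375824608*(y-1)^4 + 40185012864*(y-1)^3 + 23659631488*(y-1)^2
      + 8174952448*(y-1) + 1258227712) /
      ((6*y+5)^2 * (6*y+8)^2 * (6*y-1)^2 * (6*y+2)^2 * y^2 * (y+1)^2
        * (2*y+1)^2 * (2*y+2)^2) := by
    unfold pq2
    field_simp
    ring
  rw [key]
  have ht : 0 < y - 1 := by linarith
  have p1 := ht
  have p2 := pow_pos ht 2
  have p3 := pow_pos ht 3
  have p4 := pow_pos ht 4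
  have p5 := pow_pos ht 5
  have p6 := pow_pos ht 6
  have p7 := pow_pos ht 7
  have p8 := pow_pos ht 8
  have p9 := pow_pos ht 9
  have p10 := pow_pos ht 10
  apply div_pos
  · positivity
  · positivity

theorem p_convex (x : ℝ) (hx : 1 < x) : 0 < deriv (deriv p) x := by
  have hmem : Set.Ioi (1:ℝ) ∈ nhds x := isOpen_Ioi.mem_nhds hx
  have hpq : p =ᶠ[nhds x] pq := Filter.eventuallyEq_of_mem hmem fun y hy => p_eq_pq hy
  have hderiv_eq : ∀ y ∈ Set.Ioi (1:ℝ), deriv p y = pq1 y := by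
    intro y hy
    have hmy : Set.Ioi (1:ℝ) ∈ nhds y := isOpen_Ioi.mem_nhds hy
    have : p =ᶠ[nhds y] pq := Filter.eventuallyEq_of_mem hmy fun z hz => p_eq_pq hz
    rw [this.deriv_eq, (pq_hasDerivAt hy).deriv]
  have hd1 : deriv p =ᶠ[nhds x] pq1 :=
    Filter.eventuallyEq_of_mem hmem hderiv_eq
  rw [hd1.deriv_eq, (pq1_hasDerivAt hx).deriv]
  exact pq2_pos hx
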